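/- Let E be a regular sublinear expectation on the space X of bounded measurable real-valued functions on (Ω, F) satisfying assumption (H₀) with constant bound M, with upper capacity C(A) := E(1_A) and lower capacity c(A) := −E(−1_A), and let {ξ_n}_{n≥1} ⊂ X be an independent sequence with respect to E. Fix ε > 0, δ > 0 and N ∈ ℕ such that for all m, n > N, c({ |Σ_{i=m}^{n} ξ_i| ≤ ε }) ≥ 1 − δ. Then C( { ω : sup_{k ≥ 1} |Σ_{i=N+1}^{N+k} ξ_i(ω)| > 2ε } ) ≤ (1 + M)δ, and consequently C( { ω : sup_{m,n > N} |Σ_{i=m}^{n} ξ_i(ω)| > 4ε } ) ≤ 2(1 + M)δ. -/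

import Mathlib

open MeasureTheory Set Filter Topology Classical

/-- The space of bounded measurable real-valued functions on `Ω`, as a submodule of `Ω → ℝ`. -/
def BM (Ω : Type*) [MeasurableSpace Ω] : Submodule ℝ (Ω → ℝ) where
  carrier := {f | Measurable f ∧ ∃ M : ℝ, ∀ ω, |f ω| ≤ M}
  zero_mem' := ⟨measurable_const, 0, by simp⟩
  add_mem' := by
    rintro f g ⟨hf, Mf, hMf⟩ ⟨hg, Mg, hMg⟩
    exact ⟨hf.add hg, Mf + Mg, fun ω => (abs_add_le _ _).trans (add_le_add (hMf ω) (hMg ω))⟩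
  smul_mem' := by
    rintro c f ⟨hf, Mf, hMf⟩
    refine ⟨hf.const_smul c, |c| * Mf, fun ω => ?_⟩
    simp only [Pi.smul_apply, smul_eq_mul, abs_mul]
    exact mul_le_mul_of_nonneg_left (hMf ω) (abs_nonneg c)

variable {Ω : Type*} [MeasurableSpace Ω]

lemma mem_BM {f : Ω → ℝ} (hf : Measurable f) (M : ℝ) (hM : ∀ ω, |f ω| ≤ M) : f ∈ BM Ω :=
  ⟨hf, M, hM⟩

lemma BM.measurable (ξ : BM Ω) : Measurable (ξ : Ω → ℝ) := ξ.2.1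

lemma BM.bounded (ξ : BM Ω) : ∃ M : ℝ, ∀ ω, |(ξ : Ω → ℝ) ω| ≤ M := ξ.2.2

/-- A sublinear expectation on the space of bounded measurable functions. -/
structure SLE (Ω : Type*) [MeasurableSpace Ω] where
  E : BM Ω → ℝ
  mono : ∀ ξ η : BM Ω, (∀ ω, (η : Ω → ℝ) ω ≤ (ξ : Ω → ℝ) ω) → E η ≤ E ξ
  const_preserve : ∀ (c : ℝ) (h : (fun _ : Ω => c) ∈ BM Ω), E ⟨fun _ => c, h⟩ = c
  subadd : ∀ ξ η : BM Ω, E (ξ + η) ≤ E ξ + E η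
  pos_homog : ∀ (c : ℝ), 0 ≤ c → ∀ ξ : BM Ω, E (c • ξ) = c * E ξ

/-- The constant function as an element of `BM Ω`. -/
def constBM (Ω : Type*) [MeasurableSpace Ω] (c : ℝ) : BM Ω :=
  ⟨fun _ => c, mem_BM measurable_const |c| fun _ => le_refl _⟩

/-- The indicator function of a measurable set as an element of `BM Ω`. -/
noncomputable def indBM {Ω : Type*} [MeasurableSpace Ω] (A : Set Ω) (hA : MeasurableSet A) : BM Ω :=
  ⟨A.indicator fun _ => 1,
    mem_BM (measurable_const.indicator hA) 1 fun ω => by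
      by_cases h : ω ∈ A <;> simp [Set.indicator_apply, h]⟩

/-- The product of two bounded measurable functions. -/
noncomputable def mulBM (ξ η : BM Ω) : BM Ω := by
  refine ⟨fun ω => (ξ : Ω → ℝ) ω * (η : Ω → ℝ) ω, ?_⟩
  obtain ⟨Mf, hMf⟩ := BM.bounded ξ
  obtain ⟨Mg, hMg⟩ := BM.bounded η
  refine mem_BM ((BM.measurable ξ).mul (BM.measurable η)) (max Mf 0 * max Mg 0) fun ω => ?_
  rw [abs_mul]
  exact mul_le_mul ((hMf ω).trans (le_max_left _ _)) ((hMg ω).trans (le_max_left _ _))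
    (abs_nonneg _) (le_max_right _ _)

/-- The upper capacity associated to a sublinear expectation: `C(A) = E(1_A)` for measurable `A`
(junk value `0` on non-measurable sets). -/
noncomputable def SLE.cap (𝔼 : SLE Ω) (A : Set Ω) : ℝ :=
  if h : MeasurableSet A then 𝔼.E (indBM A h) else 0

/-- The lower capacity associated to a sublinear expectation: `c(A) = -E(-1_A)` for measurable `A`
(junk value `0` on non-measurable sets). -/
noncomputable def SLE.lcap (𝔼 : SLE Ω) (A : Set Ω) : ℝ :=
  if h : MeasurableSet A then -𝔼.E (-(indBM A h)) else 0

/-- A linear expectation dominated by the sublinear expectation `𝔼`. -/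
def Dominated (𝔼 : SLE Ω) (L : BM Ω →ₗ[ℝ] ℝ) : Prop := ∀ ξ : BM Ω, L ξ ≤ 𝔼.E ξ

/-- `ξ` and `η` are uncorrelated with respect to `𝔼` if `L(ξη) = L(ξ)L(η)` for every
linear expectation `L` dominated by `𝔼`. -/
def Uncorrelated (𝔼 : SLE Ω) (ξ η : BM Ω) : Prop :=
  ∀ L : BM Ω →ₗ[ℝ] ℝ, Dominated 𝔼 L → L (mulBM ξ η) = L ξ * L η

/-- `𝔼` is regular: if `ξ n ↓ 0` pointwise then `𝔼.E (ξ n) ↓ 0`. -/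
def SLE.Regular (𝔼 : SLE Ω) : Prop :=
  ∀ ξ : ℕ → BM Ω, (∀ ω, Antitone fun n => (ξ n : Ω → ℝ) ω) →
    (∀ ω, Tendsto (fun n => (ξ n : Ω → ℝ) ω) atTop (𝓝 0)) →
    Tendsto (fun n => 𝔼.E (ξ n)) atTop (𝓝 0)

/-- The σ-field generated by `ξ a, …, ξ b`. -/
def sigmaGen (ξ : ℕ → BM Ω) (a b : ℕ) : MeasurableSpace Ω :=
  ⨆ i ∈ Set.Icc a b, MeasurableSpace.comap (fun ω => (ξ i : Ω → ℝ) ω) inferInstance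

/-- `{ξ_n}_{n ≥ 1}` is an independent sequence under `𝔼`: pairwise uncorrelated, and
`C(A ∩ B) ≤ C(A) C(B)` whenever `A ∈ σ(ξ_1, …, ξ_m)` and `B ∈ σ(ξ_{m+1}, …, ξ_n)`, `m < n`. -/
def IndepSeq (𝔼 : SLE Ω) (ξ : ℕ → BM Ω) : Prop :=
  (∀ i j, 1 ≤ i → 1 ≤ j → i ≠ j → Uncorrelated 𝔼 (ξ i) (ξ j)) ∧
  ∀ m n : ℕ, 1 ≤ m → m < n → ∀ A B : Set Ω,
    MeasurableSet[sigmaGen ξ 1 m] A → MeasurableSet[sigmaGen ξ (m + 1) n] B →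
    𝔼.cap (A ∩ B) ≤ 𝔼.cap A * 𝔼.cap B

/-- Assumption (H₀): for every disjoint measurable cover `{A_n}` of `Ω`,
the series `Σ C(A_n)` has bounded partial sums. -/
def H0 (𝔼 : SLE Ω) : Prop :=
  ∀ A : ℕ → Set Ω, (∀ n, MeasurableSet (A n)) → Pairwise (Function.onFun Disjoint A) →
    (⋃ n, A n) = Set.univ → ∃ M : ℝ, ∀ N : ℕ, ∑ n ∈ Finset.range N, 𝔼.cap (A n) < M

/-! The event that the partial sums `S_k = ξ_{N+1} + ⋯ + ξ_{N+k}` leave `[-2ε, 2ε]` is split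
according to the first exit time `j` (these first-exit events are disjoint). Up to a horizon `n`:
either `|S_n| > ε`, of capacity `≤ δ`, or the exit happens at some `j < n` and the increment
`S_n - S_j` exceeds `ε`. The two events involve disjoint blocks of the `ξ_i`, so independence bounds
the capacity of their intersection by `C(exit at j) · δ`, and (H₀) bounds the sum over `j` of the
`C(exit at j)` by `M`. Regularity lets `n → ∞`. For the second bound, `|S_n - S_m| > 4ε` forces
`|S_m| > 2ε` or `|S_n| > 2ε`. -/

lemma MeasurableSet.partialSups {α : Type*} [MeasurableSpace α] {f : ℕ → Set α}
    (hf : ∀ n, MeasurableSet (f n)) (n : ℕ) : MeasurableSet (partialSups f n) := by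
  rw [partialSups_eq_biUnion_range]
  exact Finset.measurableSet_biUnion _ fun i _ => hf i

lemma measurable_sigmaGen {ξ : ℕ → BM Ω} {a b i : ℕ} (h : i ∈ Icc a b) :
    Measurable[sigmaGen ξ a b] (ξ i : Ω → ℝ) :=
  Measurable.of_comap_le (le_iSup₂ (f := fun i (_ : i ∈ Icc a b) =>
    MeasurableSpace.comap (ξ i : Ω → ℝ) inferInstance) i h)

@[simp]
lemma coe_indBM (A : Set Ω) (hA : MeasurableSet A) :
    (indBM A hA : Ω → ℝ) = A.indicator fun _ => 1 := rfl

namespace SLE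

section Capacity

variable (𝔼 : SLE Ω)

lemma E_zero : 𝔼.E 0 = 0 := by
  simpa using 𝔼.pos_homog 0 le_rfl 0

lemma E_add_const (ξ : BM Ω) (c : ℝ) : 𝔼.E (ξ + constBM Ω c) = 𝔼.E ξ + c := by
  have hE_const : ∀ c, 𝔼.E (constBM Ω c) = c := fun c => 𝔼.const_preserve c _
  refine le_antisymm ((𝔼.subadd _ _).trans (by rw [hE_const])) ?_
  have h := 𝔼.subadd (ξ + constBM Ω c) (constBM Ω (-c))
  rw [add_assoc, show constBM Ω c + constBM Ω (-c) = 0 from Subtype.ext (by ext; simp [constBM]),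
    add_zero, hE_const] at h
  linarith

lemma cap_eq {A : Set Ω} (hA : MeasurableSet A) : 𝔼.cap A = 𝔼.E (indBM A hA) := dif_pos hA

lemma cap_nonneg (A : Set Ω) : 0 ≤ 𝔼.cap A := by
  unfold cap
  split_ifs with hA
  · exact 𝔼.E_zero ▸ 𝔼.mono _ _ fun ω => indicator_nonneg (fun _ _ => zero_le_one) ω
  · exact le_rfl

lemma cap_empty : 𝔼.cap ∅ = 0 := by
  rw [𝔼.cap_eq MeasurableSet.empty, ← 𝔼.E_zero]
  congr
  ext
  simp

lemma cap_mono {A B : Set Ω} (hB : MeasurableSet B) (h : A ⊆ B) : 𝔼.cap A ≤ 𝔼.cap B := by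
  by_cases hA : MeasurableSet A
  · rw [𝔼.cap_eq hA, 𝔼.cap_eq hB]
    exact 𝔼.mono _ _ (indicator_le_indicator_of_subset h fun _ => zero_le_one)
  · rw [cap, dif_neg hA]
    exact 𝔼.cap_nonneg B

lemma cap_union_le {A B : Set Ω} (hA : MeasurableSet A) (hB : MeasurableSet B) :
    𝔼.cap (A ∪ B) ≤ 𝔼.cap A + 𝔼.cap B := by
  rw [𝔼.cap_eq (hA.union hB), 𝔼.cap_eq hA, 𝔼.cap_eq hB]
  refine le_trans (𝔼.mono _ _ fun ω => ?_) (𝔼.subadd _ _)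
  by_cases hωA : ω ∈ A <;> by_cases hωB : ω ∈ B <;> simp [hωA, hωB]

lemma cap_le_cap_add_cap_diff {A B : Set Ω} (hA : MeasurableSet A) (hB : MeasurableSet B) :
    𝔼.cap A ≤ 𝔼.cap B + 𝔼.cap (A \ B) :=
  (𝔼.cap_mono (hB.union (hA.diff hB)) (by simp)).trans (𝔼.cap_union_le hB (hA.diff hB))

lemma cap_biUnion_le {ι : Type*} (s : Finset ι) {f : ι → Set Ω}
    (hf : ∀ i, MeasurableSet (f i)) : 𝔼.cap (⋃ i ∈ s, f i) ≤ ∑ i ∈ s, 𝔼.cap (f i) := by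
  induction s using Finset.induction_on with
  | empty => simp [cap_empty]
  | insert i s hi ih =>
    rw [Finset.set_biUnion_insert, Finset.sum_insert hi]
    exact (𝔼.cap_union_le (hf i) (s.measurableSet_biUnion fun i _ => hf i)).trans
      (add_le_add le_rfl ih)

lemma lcap_eq_one_sub_cap_compl {A : Set Ω} (hA : MeasurableSet A) :
    𝔼.lcap A = 1 - 𝔼.cap Aᶜ := by
  have h : -indBM A hA = indBM Aᶜ hA.compl + constBM Ω (-1) := by
    ext ω
    by_cases hω : ω ∈ A <;> simp [constBM, hω]
  rw [lcap, dif_pos hA, h, E_add_const, 𝔼.cap_eq hA.compl]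
  ring

end Capacity

lemma Regular.tendsto_cap_iUnion {𝔼 : SLE Ω} (hreg : 𝔼.Regular) {G : ℕ → Set Ω}
    (hG : ∀ n, MeasurableSet (G n)) (hmono : Monotone G) :
    Tendsto (fun n => 𝔼.cap (G n)) atTop (𝓝 (𝔼.cap (⋃ n, G n))) := by
  set U := ⋃ n, G n
  have hU : MeasurableSet U := .iUnion hG
  have hgap : Tendsto (fun n => 𝔼.cap (U \ G n)) atTop (𝓝 0) := by
    simp_rw [𝔼.cap_eq (hU.diff (hG _))]
    refine hreg _ (fun ω m n hmn => indicator_le_indicator_of_subset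
      (sdiff_subset_sdiff_right (hmono hmn)) (fun _ => zero_le_one) ω) fun ω => ?_
    by_cases hω : ω ∈ U
    · obtain ⟨k, hk⟩ := mem_iUnion.1 hω
      refine tendsto_atTop_of_eventually_const (i₀ := k) fun n hn => ?_
      rw [coe_indBM, indicator_of_notMem fun h => h.2 (hmono hn hk)]
    · refine tendsto_atTop_of_eventually_const (i₀ := 0) fun n _ => ?_
      rw [coe_indBM, indicator_of_notMem fun h => hω h.1]
  have hlower : Tendsto (fun n => 𝔼.cap U - 𝔼.cap (U \ G n)) atTop (𝓝 (𝔼.cap U)) := by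
    simpa using tendsto_const_nhds.sub hgap
  refine tendsto_of_tendsto_of_tendsto_of_le_of_le hlower tendsto_const_nhds (fun n => ?_)
    fun n => 𝔼.cap_mono hU (subset_iUnion G n)
  linarith [𝔼.cap_le_cap_add_cap_diff hU (hG n)]

def H0Bound (𝔼 : SLE Ω) (M : ℝ) : Prop :=
  ∀ A : ℕ → Set Ω, (∀ n, MeasurableSet (A n)) → Pairwise (Function.onFun Disjoint A) →
    (⋃ n, A n) = Set.univ → ∀ N : ℕ, ∑ n ∈ Finset.range N, 𝔼.cap (A n) < M

lemma H0Bound.sum_cap_lt {𝔼 : SLE Ω} {M : ℝ} (hM : 𝔼.H0Bound M) {B : ℕ → Set Ω}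
    (hB : ∀ n, MeasurableSet (B n)) (hdisj : Pairwise (Function.onFun Disjoint B))
    (s : Finset ℕ) : ∑ j ∈ s, 𝔼.cap (B j) < M := by
  let A : ℕ → Set Ω := fun
    | 0 => (⋃ n, B n)ᶜ
    | n + 1 => B n
  have hA : ∀ n, MeasurableSet (A n)
    | 0 => (MeasurableSet.iUnion hB).compl
    | n + 1 => hB n
  have hAdisj : Pairwise (Function.onFun Disjoint A) := by
    rintro (_ | i) (_ | j) hij
    · exact absurd rfl hij
    · exact disjoint_compl_left.mono_right (subset_iUnion B j)
    · exact disjoint_compl_right.mono_left (subset_iUnion B i)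
    · exact hdisj (by simpa using hij)
  have hAcover : (⋃ n, A n) = univ := by
    refine eq_univ_of_forall fun ω => ?_
    by_cases hω : ω ∈ ⋃ n, B n
    · obtain ⟨n, hn⟩ := mem_iUnion.1 hω
      exact mem_iUnion.2 ⟨n + 1, hn⟩
    · exact mem_iUnion.2 ⟨0, hω⟩
  obtain ⟨n, hsn⟩ := s.exists_nat_subset_range
  have hsum := hM A hA hAdisj hAcover (n + 1)
  rw [Finset.sum_range_succ'] at hsum
  calc ∑ j ∈ s, 𝔼.cap (B j) ≤ ∑ j ∈ Finset.range n, 𝔼.cap (B j) :=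
        Finset.sum_le_sum_of_subset_of_nonneg hsn fun j _ _ => 𝔼.cap_nonneg _
    _ < M := by linarith [𝔼.cap_nonneg (A 0)]

end SLE

def sumIoc (ξ : ℕ → BM Ω) (a b : ℕ) (ω : Ω) : ℝ := ∑ i ∈ Finset.Ioc a b, (ξ i : Ω → ℝ) ω

def largeSumSet (ξ : ℕ → BM Ω) (a b : ℕ) (c : ℝ) : Set Ω := {ω | c < |sumIoc ξ a b ω|}

section BlockSums

variable (ξ : ℕ → BM Ω)

lemma sumIoc_of_le {a b : ℕ} (h : b ≤ a) (ω : Ω) : sumIoc ξ a b ω = 0 := by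
  simp [sumIoc, Finset.Ioc_eq_empty_of_le h]

lemma sumIoc_add_sumIoc {a b c : ℕ} (hab : a ≤ b) (hbc : b ≤ c) (ω : Ω) :
    sumIoc ξ a b ω + sumIoc ξ b c ω = sumIoc ξ a c ω :=
  Finset.sum_Ioc_consecutive _ hab hbc

lemma abs_sumIoc_le {a j : ℕ} (haj : a ≤ j) (n : ℕ) (ω : Ω) :
    |sumIoc ξ j n ω| ≤ |sumIoc ξ a j ω| + |sumIoc ξ a n ω| := by
  rcases le_total j n with hjn | hnj
  · have h := abs_sub (sumIoc ξ a j ω + sumIoc ξ j n ω) (sumIoc ξ a j ω)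
    rw [add_sub_cancel_left, sumIoc_add_sumIoc ξ haj hjn] at h
    linarith
  · rw [sumIoc_of_le ξ hnj, abs_zero]
    positivity

lemma measurable_sumIoc_sigmaGen {a b c d : ℕ} (hc : c ≤ a + 1) (hd : b ≤ d) :
    Measurable[sigmaGen ξ c d] (sumIoc ξ a b) :=
  Finset.measurable_sum _ fun i hi => by
    have := Finset.mem_Ioc.1 hi
    exact measurable_sigmaGen ⟨by omega, by omega⟩

lemma measurableSet_largeSumSet_sigmaGen {a b c d : ℕ} (hc : c ≤ a + 1) (hd : b ≤ d) (t : ℝ) :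
    MeasurableSet[sigmaGen ξ c d] (largeSumSet ξ a b t) :=
  (measurable_abs.comp (measurable_sumIoc_sigmaGen ξ hc hd)) measurableSet_Ioi

lemma measurableSet_largeSumSet (a b : ℕ) (t : ℝ) : MeasurableSet (largeSumSet ξ a b t) :=
  (measurable_abs.comp (Finset.measurable_sum _ fun i _ => (ξ i).2.1)) measurableSet_Ioi

lemma measurableSet_disjointed_largeSumSet_sigmaGen (a j : ℕ) (t : ℝ) :
    MeasurableSet[sigmaGen ξ 1 j] (disjointed (fun k => largeSumSet ξ a k t) j) := by
  rw [disjointed_eq_inter_compl]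
  exact (measurableSet_largeSumSet_sigmaGen ξ (by omega) le_rfl _).inter <|
    .iInter fun i => .iInter fun hi =>
      (measurableSet_largeSumSet_sigmaGen ξ (by omega) hi.le _).compl

lemma largeSumSet_subset_iUnion {a j : ℕ} (haj : a ≤ j) (n : ℕ) (t : ℝ) :
    largeSumSet ξ j n (2 * t) ⊆ ⋃ k, largeSumSet ξ a k t := by
  intro ω hω
  by_contra h
  simp only [largeSumSet, mem_iUnion, mem_ofPred_eq, not_exists, not_lt] at hω h
  linarith [abs_sumIoc_le ξ haj n ω, h j, h n]

lemma partialSups_largeSumSet_diff_subset {ε : ℝ} (hε : 0 ≤ ε) (a n : ℕ) :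
    partialSups (fun j => largeSumSet ξ a j (2 * ε)) n \ largeSumSet ξ a n ε ⊆
      ⋃ j ∈ Finset.Ioo a n,
        disjointed (fun j => largeSumSet ξ a j (2 * ε)) j ∩ largeSumSet ξ j n ε := by
  rintro ω ⟨hω, hωn⟩
  rw [← biUnion_Iic_disjointed, mem_iUnion₂] at hω
  obtain ⟨j, hjn, hωj⟩ := hω
  have hj : 2 * ε < |sumIoc ξ a j ω| := disjointed_subset _ j hωj
  simp only [largeSumSet, mem_ofPred_eq, not_lt] at hωn
  have haj : a < j := by
    by_contra! h
    rw [sumIoc_of_le ξ h, abs_zero] at hj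
    linarith
  have hjn : j < n := by
    refine lt_of_le_of_ne (Finset.mem_Iic.1 hjn) ?_
    rintro rfl
    linarith
  refine mem_biUnion (Finset.mem_Ioo.2 ⟨haj, hjn⟩) ⟨hωj, ?_⟩
  have hsplit : sumIoc ξ a j ω = sumIoc ξ a n ω - sumIoc ξ j n ω := by
    linarith [sumIoc_add_sumIoc ξ haj.le hjn.le ω]
  rw [hsplit] at hj
  show ε < |sumIoc ξ j n ω|
  linarith [abs_sub (sumIoc ξ a n ω) (sumIoc ξ j n ω)]

end BlockSums

section MaximalInequality

variable {𝔼 : SLE Ω} {ξ : ℕ → BM Ω} {a : ℕ} {ε δ M : ℝ}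

lemma cap_largeSumSet_le_of_le_lcap {j n : ℕ}
    (h : 1 - δ ≤ 𝔼.lcap {ω | |∑ i ∈ Finset.Icc (j + 1) n, (ξ i : Ω → ℝ) ω| ≤ ε}) :
    𝔼.cap (largeSumSet ξ j n ε) ≤ δ := by
  have hcompl : {ω | |∑ i ∈ Finset.Icc (j + 1) n, (ξ i : Ω → ℝ) ω| ≤ ε} =
      (largeSumSet ξ j n ε)ᶜ := by
    ext ω
    simp [largeSumSet, sumIoc, Finset.Icc_add_one_left_eq_Ioc]
  rw [hcompl, 𝔼.lcap_eq_one_sub_cap_compl (measurableSet_largeSumSet ξ j n ε).compl,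
    compl_compl] at h
  linarith

lemma cap_disjointed_inter_largeSumSet_le (hind : IndepSeq 𝔼 ξ) (t : ℝ) {j n : ℕ} (hj : 1 ≤ j)
    (hjn : j < n) (hδ : 𝔼.cap (largeSumSet ξ j n ε) ≤ δ) :
    𝔼.cap (disjointed (fun k => largeSumSet ξ a k t) j ∩ largeSumSet ξ j n ε) ≤
      𝔼.cap (disjointed (fun k => largeSumSet ξ a k t) j) * δ :=
  (hind.2 j n hj hjn _ _ (measurableSet_disjointed_largeSumSet_sigmaGen ξ a j t)
    (measurableSet_largeSumSet_sigmaGen ξ le_rfl le_rfl _)).trans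
    (mul_le_mul_of_nonneg_left hδ (𝔼.cap_nonneg _))

theorem cap_partialSups_largeSumSet_le (hM : 𝔼.H0Bound M) (hind : IndepSeq 𝔼 ξ) (hε : 0 ≤ ε)
    (hδ : 0 ≤ δ) (hsmall : ∀ j n, a ≤ j → j < n → 𝔼.cap (largeSumSet ξ j n ε) ≤ δ)
    {n : ℕ} (hn : a < n) :
    𝔼.cap (partialSups (fun j => largeSumSet ξ a j (2 * ε)) n) ≤ (1 + M) * δ := by
  set A := fun j => largeSumSet ξ a j (2 * ε)
  have hA : ∀ j, MeasurableSet (A j) := fun j => measurableSet_largeSumSet ξ a j _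
  have hpieces : ∀ j, MeasurableSet (disjointed A j ∩ largeSumSet ξ j n ε) := fun j =>
    (MeasurableSet.disjointed hA j).inter (measurableSet_largeSumSet ξ j n ε)
  calc 𝔼.cap (partialSups A n)
      ≤ 𝔼.cap (largeSumSet ξ a n ε) + 𝔼.cap (partialSups A n \ largeSumSet ξ a n ε) :=
        𝔼.cap_le_cap_add_cap_diff (.partialSups hA n) (measurableSet_largeSumSet ξ a n ε)
    _ ≤ δ + ∑ j ∈ Finset.Ioo a n, 𝔼.cap (disjointed A j ∩ largeSumSet ξ j n ε) :=
        add_le_add (hsmall a n le_rfl hn)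
          ((𝔼.cap_mono (Finset.measurableSet_biUnion _ fun j _ => hpieces j)
            (partialSups_largeSumSet_diff_subset ξ hε a n)).trans (𝔼.cap_biUnion_le _ hpieces))
    _ ≤ δ + (∑ j ∈ Finset.Ioo a n, 𝔼.cap (disjointed A j)) * δ := by
        rw [Finset.sum_mul]
        refine add_le_add le_rfl (Finset.sum_le_sum fun j hj => ?_)
        obtain ⟨haj, hjn⟩ := Finset.mem_Ioo.1 hj
        exact cap_disjointed_inter_largeSumSet_le hind _ (by omega) hjn
          (hsmall j n haj.le hjn)
    _ ≤ (1 + M) * δ := by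
        nlinarith [hM.sum_cap_lt (MeasurableSet.disjointed hA) (disjoint_disjointed A)
          (Finset.Ioo a n)]

theorem cap_iUnion_largeSumSet_le (hreg : 𝔼.Regular) (hM : 𝔼.H0Bound M) (hind : IndepSeq 𝔼 ξ)
    (hε : 0 ≤ ε) (hδ : 0 ≤ δ) (hsmall : ∀ j n, a ≤ j → j < n → 𝔼.cap (largeSumSet ξ j n ε) ≤ δ) :
    𝔼.cap (⋃ j, largeSumSet ξ a j (2 * ε)) ≤ (1 + M) * δ := by
  have hunion : ⋃ n, partialSups (fun j => largeSumSet ξ a j (2 * ε)) n =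
      ⋃ j, largeSumSet ξ a j (2 * ε) := iSup_partialSups_eq _
  rw [← hunion]
  refine le_of_tendsto (hreg.tendsto_cap_iUnion
    (.partialSups fun j => measurableSet_largeSumSet ξ a j _) (partialSups_monotone _)) ?_
  filter_upwards [eventually_gt_atTop a] with n hn
  exact cap_partialSups_largeSumSet_le hM hind hε hδ hsmall hn

end MaximalInequality

/-- Tail capacity bounds for an independent sequence under a regular sublinear
expectation satisfying (H₀) with bound `M`. -/
theorem tail_sup_capacity_bound (𝔼 : SLE Ω) (hreg : 𝔼.Regular) (M : ℝ)
    (hH0 : ∀ A : ℕ → Set Ω, (∀ n, MeasurableSet (A n)) →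
      Pairwise (Function.onFun Disjoint A) → (⋃ n, A n) = Set.univ →
      ∀ N : ℕ, ∑ n ∈ Finset.range N, 𝔼.cap (A n) < M)
    (ξ : ℕ → BM Ω) (hind : IndepSeq 𝔼 ξ)
    (ε δ : ℝ) (hε : 0 < ε) (hδ : 0 < δ) (N : ℕ)
    (hc : ∀ m n, N < m → N < n → m ≤ n →
      1 - δ ≤ 𝔼.lcap {ω | |∑ i ∈ Finset.Icc m n, (ξ i : Ω → ℝ) ω| ≤ ε}) :
    𝔼.cap {ω | ∃ k, 1 ≤ k ∧
        2 * ε < |∑ i ∈ Finset.Icc (N + 1) (N + k), (ξ i : Ω → ℝ) ω|} ≤ (1 + M) * δ ∧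
    𝔼.cap {ω | ∃ m n, N < m ∧ N < n ∧
        4 * ε < |∑ i ∈ Finset.Icc m n, (ξ i : Ω → ℝ) ω|} ≤ 2 * (1 + M) * δ := by
  have hbound := cap_iUnion_largeSumSet_le (a := N) hreg hH0 hind hε.le hδ.le
    fun j n hj hjn => cap_largeSumSet_le_of_le_lcap (hc (j + 1) n (by omega) (by omega) hjn)
  have hmeas : MeasurableSet (⋃ j, largeSumSet ξ N j (2 * ε)) :=
    .iUnion fun j => measurableSet_largeSumSet ξ N j _
  refine ⟨(𝔼.cap_mono hmeas ?_).trans hbound, (𝔼.cap_mono hmeas ?_).trans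
    (hbound.trans (by linarith [𝔼.cap_nonneg (⋃ j, largeSumSet ξ N j (2 * ε))]))⟩
  · rintro ω ⟨k, -, hk⟩
    refine mem_iUnion.2 ⟨N + k, ?_⟩
    simpa [largeSumSet, sumIoc, Finset.Icc_add_one_left_eq_Ioc] using hk
  · rintro ω ⟨m, n, hm, -, h⟩
    obtain ⟨j, rfl⟩ : ∃ j, m = j + 1 := ⟨m - 1, by omega⟩
    refine largeSumSet_subset_iUnion ξ (by omega : N ≤ j) n _ ?_
    rw [Finset.Icc_add_one_left_eq_Ioc] at h
    show 2 * (2 * ε) < |∑ i ∈ Finset.Ioc j n, (ξ i : Ω → ℝ) ω|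
    linarith
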